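/- For every integer n ≥ 0 and every real y with −π/2 < y < π/2, ∑_{m=n+1}^∞ (C(2m,m)/4^m)·sin(y)^{2m}/(2m) = ∫_0^y (C(2n,n)/4^n)·sin(t)^{2n}·tan(t) dt − ∫_0^y (1/sin(t))·( ∫_0^t (C(2n,n)/4^n)·sin(u)^{2n}·tan(u)·sec(u) du ) dt, where both integrals exist (the inner-integral expression divided by sin(t) extends continuously to t = 0 with value 0). -/

import Mathlib

/-!
With `c m = C(2m,m)/4^m`, the truncation `P_N t = cos t * ∑_{m ≤ N} c m * sin t ^ (2m)` of
`cos t / √(1 - sin² t) = 1` has, by the recurrence `(2m+2) c (m+1) = (2m+1) c m`, the single-term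
derivative `-(2N+1) c N sin^(2N+1) t`. Hence the inner integral is
`c n sin^(2n+2) t / cos t + P_n t - 1`, and the difference of the two outer integrands is
`g_n = (1 - P_n) / sin`. Since `g_N - g_(N+1) = c (N+1) sin^(2N+1) cos` integrates to the
`(N+1)`-st term of the series, the partial sums of the tail are `∫ g_n - ∫ g_(n+K)`, and
`∫ g_N → 0` because the mean value theorem gives `|g_N t| ≤ (2N+1) |t| sin^(2N) t`.
-/

open Real MeasureTheory Finset Filter Topology Set

namespace AperyTail

noncomputable def normCentralBinom (m : ℕ) : ℝ := (Nat.choose (2 * m) m : ℝ) / 4 ^ m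

lemma normCentralBinom_zero : normCentralBinom 0 = 1 := by simp [normCentralBinom]

lemma normCentralBinom_nonneg (m : ℕ) : 0 ≤ normCentralBinom m := by
  unfold normCentralBinom; positivity

lemma two_mul_succ_mul_normCentralBinom_succ (m : ℕ) :
    2 * (m + 1) * normCentralBinom (m + 1) = (2 * m + 1) * normCentralBinom m := by
  have h : ((m + 1) * Nat.centralBinom (m + 1) : ℝ) = 2 * (2 * m + 1) * Nat.centralBinom m := by
    exact_mod_cast Nat.succ_mul_centralBinom_succ m
  simp only [normCentralBinom, ← Nat.centralBinom_eq_two_mul_choose, pow_succ]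
  field_simp
  linear_combination 2 * h

lemma normCentralBinom_le_one (m : ℕ) : normCentralBinom m ≤ 1 := by
  induction m with
  | zero => rw [normCentralBinom_zero]
  | succ m ih =>
    have := two_mul_succ_mul_normCentralBinom_succ m
    nlinarith [normCentralBinom_nonneg m, normCentralBinom_nonneg (m + 1)]

noncomputable def cosPartialSum (N : ℕ) (t : ℝ) : ℝ :=
  cos t * ∑ m ∈ range (N + 1), normCentralBinom m * sin t ^ (2 * m)

lemma cosPartialSum_succ (N : ℕ) (t : ℝ) :
    cosPartialSum (N + 1) t =
      cosPartialSum N t + normCentralBinom (N + 1) * sin t ^ (2 * (N + 1)) * cos t := by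
  rw [cosPartialSum, sum_range_succ, cosPartialSum]
  ring

lemma cosPartialSum_zero_right (N : ℕ) : cosPartialSum N 0 = 1 := by
  simp [cosPartialSum, sum_range_succ', normCentralBinom_zero]

lemma hasDerivAt_cosPartialSum (N : ℕ) (t : ℝ) :
    HasDerivAt (cosPartialSum N) (-((2 * N + 1) * normCentralBinom N * sin t ^ (2 * N + 1))) t := by
  induction N with
  | zero =>
    have h : cosPartialSum 0 = cos := funext fun t => by simp [cosPartialSum, normCentralBinom_zero]
    simpa [h, normCentralBinom_zero] using hasDerivAt_cos t
  | succ N ih =>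
    have hterm : HasDerivAt (fun t => normCentralBinom (N + 1) * sin t ^ (2 * (N + 1)) * cos t)
        (normCentralBinom (N + 1) * ((2 * (N + 1) : ℕ) * sin t ^ (2 * (N + 1) - 1) * cos t) *
            cos t + normCentralBinom (N + 1) * sin t ^ (2 * (N + 1)) * -sin t) t :=
      (((hasDerivAt_sin t).pow _).const_mul _).mul (hasDerivAt_cos t)
    rw [show cosPartialSum (N + 1) = _ from funext (cosPartialSum_succ N)]
    refine (ih.add hterm).congr_deriv ?_
    rw [show 2 * (N + 1) - 1 = 2 * N + 1 by omega]
    push_cast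
    linear_combination ((2 * (N : ℝ) + 2) * normCentralBinom (N + 1) * sin t ^ (2 * N + 1)) *
      cos_sq' t + sin t ^ (2 * N + 1) * two_mul_succ_mul_normCentralBinom_succ N

/-- The function `g_N = (1 - cosPartialSum N) / sin`, written so as to be visibly continuous
where `sin t = 0`. -/
noncomputable def tailIntegrand (N : ℕ) (t : ℝ) : ℝ :=
  sin t / (1 + cos t) - cos t * ∑ m ∈ range N, normCentralBinom (m + 1) * sin t ^ (2 * m + 1)

lemma sin_mul_tailIntegrand (N : ℕ) {t : ℝ} (ht : 1 + cos t ≠ 0) :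
    sin t * tailIntegrand N t = 1 - cosPartialSum N t := by
  have hsum : ∑ m ∈ range (N + 1), normCentralBinom m * sin t ^ (2 * m) =
      1 + sin t * ∑ m ∈ range N, normCentralBinom (m + 1) * sin t ^ (2 * m + 1) := by
    rw [sum_range_succ', mul_sum]
    simp only [normCentralBinom_zero, mul_zero, pow_zero, mul_one]
    rw [add_comm]
    congr 1
    refine sum_congr rfl fun m _ => ?_
    ring
  rw [tailIntegrand, cosPartialSum, hsum]
  field_simp
  linear_combination sin_sq t

lemma tailIntegrand_sub_succ (N : ℕ) (t : ℝ) :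
    tailIntegrand N t - tailIntegrand (N + 1) t =
      normCentralBinom (N + 1) * sin t ^ (2 * N + 1) * cos t := by
  rw [tailIntegrand, tailIntegrand, sum_range_succ]
  ring

lemma tailIntegrand_of_sin_eq_zero (N : ℕ) {t : ℝ} (ht : sin t = 0) :
    tailIntegrand N t = 0 := by
  simp [tailIntegrand, ht]

lemma continuousOn_tailIntegrand (N : ℕ) : ContinuousOn (tailIntegrand N) {t | 1 + cos t ≠ 0} :=
  (continuous_sin.continuousOn.div (by fun_prop) fun _ ht => ht).sub (by fun_prop)

noncomputable def innerPrimitive (n : ℕ) (t : ℝ) : ℝ :=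
  normCentralBinom n * sin t ^ (2 * n + 2) / cos t + cosPartialSum n t - 1

lemma innerPrimitive_zero_right (n : ℕ) : innerPrimitive n 0 = 0 := by
  simp [innerPrimitive, cosPartialSum_zero_right]

lemma hasDerivAt_innerPrimitive (n : ℕ) {t : ℝ} (ht : cos t ≠ 0) :
    HasDerivAt (innerPrimitive n)
      (normCentralBinom n * sin t ^ (2 * n) * tan t * (1 / cos t)) t := by
  have hquot := (((hasDerivAt_sin t).pow (2 * n + 2)).const_mul (normCentralBinom n)).div
    (hasDerivAt_cos t) ht
  refine ((hquot.add (hasDerivAt_cosPartialSum n t)).sub_const 1).congr_deriv ?_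
  rw [show 2 * n + 2 - 1 = 2 * n + 1 by omega, tan_eq_sin_div_cos, Pi.pow_apply]
  field_simp
  push_cast
  linear_combination (normCentralBinom n * sin t * sin t ^ (2 * n)) * sin_sq_add_cos_sq t

lemma one_div_sin_mul_innerPrimitive (n : ℕ) {t : ℝ} (ht : 0 < cos t) :
    1 / sin t * innerPrimitive n t =
      normCentralBinom n * sin t ^ (2 * n) * tan t - tailIntegrand n t := by
  rcases eq_or_ne (sin t) 0 with hs | hs
  · simp [tan_eq_sin_div_cos, hs, tailIntegrand_of_sin_eq_zero n hs]
  · have h := sin_mul_tailIntegrand n (t := t) (by positivity)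
    rw [tan_eq_sin_div_cos, innerPrimitive]
    field_simp
    linear_combination cos t * h

lemma abs_le_abs_of_mem_uIcc_zero {t y : ℝ} (ht : t ∈ uIcc 0 y) : |t| ≤ |y| := by
  simpa using abs_sub_left_of_mem_uIcc ht

lemma sin_sq_le_sin_sq {a b : ℝ} (hab : |a| ≤ |b|) (hb : |b| ≤ π / 2) :
    sin a ^ 2 ≤ sin b ^ 2 := by
  have hcos : cos b ≤ cos a := by
    rw [← cos_abs a, ← cos_abs b]
    exact cos_le_cos_of_nonneg_of_le_pi (abs_nonneg a) (by linarith [pi_pos]) hab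
  have hcos_b : 0 ≤ cos b := by
    rw [← cos_abs b]
    exact cos_nonneg_of_mem_Icc ⟨by linarith [abs_nonneg b, pi_pos], hb⟩
  nlinarith [sin_sq a, sin_sq b]

lemma abs_one_sub_cosPartialSum_le (N : ℕ) {t : ℝ} (ht : |t| ≤ π / 2) :
    |1 - cosPartialSum N t| ≤
      (2 * N + 1) * normCentralBinom N * |sin t| ^ (2 * N + 1) * |t| := by
  have hbound : ∀ u ∈ uIcc 0 t,
      ‖-((2 * N + 1) * normCentralBinom N * sin u ^ (2 * N + 1))‖ ≤
        (2 * N + 1) * normCentralBinom N * |sin t| ^ (2 * N + 1) := by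
    intro u hu
    have hut := abs_le_abs_of_mem_uIcc_zero hu
    have hsin : |sin u| ≤ |sin t| := sq_le_sq.mp (sin_sq_le_sin_sq hut ht)
    have hc := normCentralBinom_nonneg N
    rw [norm_neg, Real.norm_eq_abs, abs_mul, abs_pow, abs_of_nonneg (by positivity)]
    gcongr
  have hmvt := Convex.norm_image_sub_le_of_norm_hasDerivWithin_le
    (fun u _ => (hasDerivAt_cosPartialSum N u).hasDerivWithinAt) hbound (convex_uIcc 0 t)
    left_mem_uIcc right_mem_uIcc
  rwa [cosPartialSum_zero_right, Real.norm_eq_abs, Real.norm_eq_abs, sub_zero,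
    abs_sub_comm] at hmvt

lemma abs_tailIntegrand_le (N : ℕ) {t : ℝ} (ht : |t| < π / 2) :
    |tailIntegrand N t| ≤ (2 * N + 1) * |t| * (sin t ^ 2) ^ N := by
  rcases eq_or_ne (sin t) 0 with hs | hs
  · rw [tailIntegrand_of_sin_eq_zero N hs, abs_zero]
    positivity
  have hcos : 0 < cos t := cos_pos_of_mem_Ioo (abs_lt.mp ht)
  have hmul : |sin t| * |tailIntegrand N t| ≤
      |sin t| * ((2 * N + 1) * normCentralBinom N * |t| * (sin t ^ 2) ^ N) := by
    rw [← abs_mul, sin_mul_tailIntegrand N (by positivity)]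
    refine (abs_one_sub_cosPartialSum_le N ht.le).trans_eq ?_
    rw [pow_succ, pow_mul, sq_abs]
    ring
  calc |tailIntegrand N t|
      ≤ (2 * N + 1) * normCentralBinom N * |t| * (sin t ^ 2) ^ N :=
        le_of_mul_le_mul_left hmul (abs_pos.mpr hs)
    _ ≤ (2 * N + 1) * 1 * |t| * (sin t ^ 2) ^ N := by
        gcongr
        exact normCentralBinom_le_one N
    _ = (2 * N + 1) * |t| * (sin t ^ 2) ^ N := by ring

section

variable {y : ℝ} (hy : |y| < π / 2)
include hy

lemma cos_pos_of_mem_uIcc {t : ℝ} (ht : t ∈ uIcc 0 y) : 0 < cos t :=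
  cos_pos_of_mem_Ioo (abs_lt.mp ((abs_le_abs_of_mem_uIcc_zero ht).trans_lt hy))

lemma intervalIntegrable_tailIntegrand (N : ℕ) :
    IntervalIntegrable (tailIntegrand N) volume 0 y :=
  ((continuousOn_tailIntegrand N).mono fun _ ht =>
    (add_pos one_pos (cos_pos_of_mem_uIcc hy ht)).ne').intervalIntegrable

lemma integral_tailIntegrand_sub_succ (N : ℕ) :
    (∫ t in (0 : ℝ)..y, tailIntegrand N t) - ∫ t in (0 : ℝ)..y, tailIntegrand (N + 1) t =
      normCentralBinom (N + 1) * sin y ^ (2 * (N + 1)) / (2 * ((N : ℝ) + 1)) := by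
  rw [← intervalIntegral.integral_sub (intervalIntegrable_tailIntegrand hy N)
    (intervalIntegrable_tailIntegrand hy (N + 1))]
  simp only [tailIntegrand_sub_succ, mul_assoc, intervalIntegral.integral_const_mul]
  have h := integral_sin_pow_mul_cos_pow_odd (a := 0) (b := y) (2 * N + 1) 0
  simp only [mul_zero, zero_add, pow_one, pow_zero, mul_one, integral_pow, sin_zero] at h
  rw [h, show 2 * N + 1 + 1 = 2 * (N + 1) by ring]
  push_cast
  field_simp
  ring

lemma tendsto_integral_tailIntegrand :
    Tendsto (fun N : ℕ => ∫ t in (0 : ℝ)..y, tailIntegrand N t) atTop (𝓝 0) := by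
  set r := sin y ^ 2
  have hr : r < 1 := by nlinarith [sin_sq_add_cos_sq y, cos_pos_of_mem_uIcc hy right_mem_uIcc]
  have hbound : ∀ N : ℕ, ‖∫ t in (0 : ℝ)..y, tailIntegrand N t‖ ≤
      (2 * (N * r ^ N) + r ^ N) * |y| ^ 2 := by
    intro N
    refine (intervalIntegral.norm_integral_le_of_norm_le_const
      (C := (2 * N + 1) * |y| * r ^ N) fun t ht => ?_).trans_eq (by rw [sub_zero]; ring)
    have hty := abs_le_abs_of_mem_uIcc_zero (uIoc_subset_uIcc ht)
    rw [Real.norm_eq_abs]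
    refine (abs_tailIntegrand_le N (hty.trans_lt hy)).trans ?_
    gcongr
    exact sin_sq_le_sin_sq hty hy.le
  have hlim : Tendsto (fun N : ℕ => (2 * (N * r ^ N) + r ^ N) * |y| ^ 2) atTop (𝓝 0) := by
    have h := ((tendsto_self_mul_const_pow_of_lt_one (sq_nonneg _) hr).const_mul 2).add
      (tendsto_pow_atTop_nhds_zero_of_lt_one (sq_nonneg _) hr)
    simpa only [mul_zero, add_zero, zero_mul] using h.mul_const (|y| ^ 2)
  exact squeeze_zero_norm hbound hlim

lemma hasSum_integral_tailIntegrand (n : ℕ) :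
    HasSum (fun k : ℕ => normCentralBinom (n + 1 + k) * sin y ^ (2 * (n + 1 + k)) /
        (2 * ((n : ℝ) + 1 + k)))
      (∫ t in (0 : ℝ)..y, tailIntegrand n t) := by
  set I := fun N : ℕ => ∫ t in (0 : ℝ)..y, tailIntegrand N t
  have hterm : ∀ k : ℕ, normCentralBinom (n + 1 + k) * sin y ^ (2 * (n + 1 + k)) /
      (2 * ((n : ℝ) + 1 + k)) = I (n + k) - I (n + k + 1) := by
    intro k
    rw [integral_tailIntegrand_sub_succ hy, add_right_comm n 1 k]
    push_cast
    ring_nf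
  have hnonneg : ∀ k : ℕ, 0 ≤ normCentralBinom (n + 1 + k) * sin y ^ (2 * (n + 1 + k)) /
      (2 * ((n : ℝ) + 1 + k)) := fun k => by
    have hc := normCentralBinom_nonneg (n + 1 + k)
    rw [pow_mul]
    positivity
  rw [hasSum_iff_tendsto_nat_of_nonneg hnonneg]
  have htelescope : ∀ K : ℕ, ∑ k ∈ range K, (I (n + k) - I (n + k + 1)) = I n - I (n + K) :=
    fun K => sum_range_sub' (fun k => I (n + k)) K
  simp only [hterm, htelescope]
  have hshift : Tendsto (fun K : ℕ => I (n + K)) atTop (𝓝 0) :=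
    (tendsto_integral_tailIntegrand hy).comp (tendsto_atTop_mono (Nat.le_add_left · n) tendsto_id)
  simpa using (tendsto_const_nhds (x := I n)).sub hshift

lemma integral_eq_innerPrimitive (n : ℕ) :
    ∫ u in (0 : ℝ)..y, normCentralBinom n * sin u ^ (2 * n) * tan u * (1 / cos u) =
      innerPrimitive n y := by
  have hcos : ∀ u ∈ uIcc 0 y, cos u ≠ 0 := fun u hu => (cos_pos_of_mem_uIcc hy hu).ne'
  rw [intervalIntegral.integral_eq_sub_of_hasDerivAt
    (fun u hu => hasDerivAt_innerPrimitive n (hcos u hu)), innerPrimitive_zero_right, sub_zero]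
  refine ContinuousOn.intervalIntegrable ?_
  exact ((continuousOn_const.mul (continuous_sin.continuousOn.pow _)).mul
    (continuousOn_tan.mono hcos)).mul (continuousOn_const.div continuous_cos.continuousOn hcos)

end

end AperyTail

open AperyTail in
/-- For every integer `n ≥ 0` and real `y` with `−π/2 < y < π/2`,
`∑_{m=n+1}^∞ (C(2m,m)/4^m)·sin(y)^{2m}/(2m)`
equals
`∫_0^y (C(2n,n)/4^n)·sin(t)^{2n}·tan(t) dt −
 ∫_0^y (1/sin t)·(∫_0^t (C(2n,n)/4^n)·sin(u)^{2n}·tan(u)·sec(u) du) dt`,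
where both integrals exist. -/
theorem apery_tail_2m (n : ℕ) (y : ℝ) (hy : -(π / 2) < y) (hy' : y < π / 2) :
    IntervalIntegrable
      (fun t : ℝ => (Nat.choose (2 * n) n : ℝ) / 4 ^ n * Real.sin t ^ (2 * n) * Real.tan t)
      volume 0 y ∧
    IntervalIntegrable
      (fun t : ℝ => (1 / Real.sin t) *
        ∫ u in (0 : ℝ)..t,
          (Nat.choose (2 * n) n : ℝ) / 4 ^ n * Real.sin u ^ (2 * n) *
            Real.tan u * (1 / Real.cos u))
      volume 0 y ∧
    HasSum
      (fun k : ℕ =>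
        (Nat.choose (2 * (n + 1 + k)) (n + 1 + k) : ℝ) / 4 ^ (n + 1 + k) *
          Real.sin y ^ (2 * (n + 1 + k)) / (2 * ((n : ℝ) + 1 + (k : ℝ))))
      ((∫ t in (0 : ℝ)..y,
          (Nat.choose (2 * n) n : ℝ) / 4 ^ n * Real.sin t ^ (2 * n) * Real.tan t) -
        ∫ t in (0 : ℝ)..y,
          (1 / Real.sin t) *
            ∫ u in (0 : ℝ)..t,
              (Nat.choose (2 * n) n : ℝ) / 4 ^ n * Real.sin u ^ (2 * n) *
                Real.tan u * (1 / Real.cos u)) := by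
  have hy_abs : |y| < π / 2 := abs_lt.mpr ⟨hy, hy'⟩
  have hcoeff (m : ℕ) : (Nat.choose (2 * m) m : ℝ) / 4 ^ m = normCentralBinom m := rfl
  simp only [hcoeff]
  have hcos : ∀ t ∈ uIcc 0 y, cos t ≠ 0 := fun t ht => (cos_pos_of_mem_uIcc hy_abs ht).ne'
  have houter : ContinuousOn (fun t => normCentralBinom n * sin t ^ (2 * n) * tan t) (uIcc 0 y) :=
    (continuousOn_const.mul (continuous_sin.continuousOn.pow _)).mul (continuousOn_tan.mono hcos)
  have hinner : EqOn
      (fun t => 1 / sin t *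
        ∫ u in (0 : ℝ)..t, normCentralBinom n * sin u ^ (2 * n) * tan u * (1 / cos u))
      (fun t => normCentralBinom n * sin t ^ (2 * n) * tan t - tailIntegrand n t) (uIcc 0 y) :=
    fun t ht => by
      dsimp only
      rw [integral_eq_innerPrimitive ((abs_le_abs_of_mem_uIcc_zero ht).trans_lt hy_abs),
        one_div_sin_mul_innerPrimitive n (cos_pos_of_mem_uIcc hy_abs ht)]
  have htail := intervalIntegrable_tailIntegrand hy_abs n
  refine ⟨houter.intervalIntegrable, (houter.intervalIntegrable.sub htail).congr
    fun t ht => (hinner (uIoc_subset_uIcc ht)).symm, ?_⟩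
  rw [intervalIntegral.integral_congr hinner,
    intervalIntegral.integral_sub houter.intervalIntegrable htail, sub_sub_cancel]
  exact hasSum_integral_tailIntegrand hy_abs n
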